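/- Any two Cartan involutions on End_R(M) for a finite-dimensional real vector space M are conjugate by an invertible element: if σ₁ and σ₂ are adjoint involutions of two inner products on M, then there exists an invertible a ∈ End_R(M) such that σ₂(x) = a·σ₁(a⁻¹xa)·a⁻¹ for all x. -/

import Mathlib

/-!
Normalising a `B`-orthogonal basis gives a `B`-orthonormal one, so any two inner products on `M`
are related by a linear automorphism `g` with `B₁ (g u) (g v) = B₂ u v`. Conjugation by `g`
carries `B₁`-adjoint pairs to `B₂`-adjoint pairs, and since an inner product is nondegenerate,
adjoints are unique; hence `σ₂` is `σ₁` conjugated by `g⁻¹`.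
-/

open Module LinearMap

namespace LinearMap

variable {R M : Type*} [CommRing R] [AddCommGroup M] [Module R M]

theorem separatingRight_of_apply_self_pos [Preorder R] {B : LinearMap.BilinForm R M}
    (hpos : ∀ u : M, u ≠ 0 → 0 < B u u) : B.SeparatingRight := fun w hw => by
  by_contra hw0
  exact (hpos w hw0).ne' (hw w)

theorem IsAdjointPair.eq_of_separatingRight {B : LinearMap.BilinForm R M} (hB : B.SeparatingRight)
    {f g₁ g₂ : Module.End R M} (h₁ : IsAdjointPair B B f g₁) (h₂ : IsAdjointPair B B f g₂) :
    g₁ = g₂ := by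
  ext w
  rw [← sub_eq_zero]
  refine hB _ fun u => ?_
  rw [map_sub, ← h₁, ← h₂, sub_self]

theorem IsAdjointPair.conj {B₁ B₂ : LinearMap.BilinForm R M} (a : (Module.End R M)ˣ)
    (ha : ∀ u v, B₁ ((↑a⁻¹ : Module.End R M) u) ((↑a⁻¹ : Module.End R M) v) = B₂ u v)
    {x y : Module.End R M} (h : IsAdjointPair B₁ B₁ x y) :
    IsAdjointPair B₂ B₂ (↑a * x * ↑a⁻¹ : Module.End R M) (↑a * y * ↑a⁻¹ : Module.End R M) :=
  fun u v => by
    have hcancel : ∀ w, (↑a⁻¹ : Module.End R M) ((a : Module.End R M) w) = w :=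
      LinearMap.congr_fun a.inv_mul
    simp only [Module.End.mul_apply, ← ha, hcancel]
    exact h _ _

end LinearMap

namespace LinearMap.BilinForm

theorem exists_basis_orthonormal {M : Type*} [AddCommGroup M] [Module ℝ M]
    [FiniteDimensional ℝ M] {B : LinearMap.BilinForm ℝ M} (hsymm : LinearMap.IsSymm B)
    (hpos : ∀ u : M, u ≠ 0 → 0 < B u u) :
    ∃ b : Basis (Fin (finrank ℝ M)) ℝ M, ∀ i j, B (b i) (b j) = if i = j then 1 else 0 := by
  obtain ⟨v, hv⟩ := exists_orthogonal_basis hsymm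
  have hvpos : ∀ i, 0 < B (v i) (v i) := fun i => hpos _ (v.ne_zero i)
  let scale i : ℝˣ :=
    Units.mk0 (√(B (v i) (v i)))⁻¹ (inv_ne_zero (Real.sqrt_pos.mpr (hvpos i)).ne')
  refine ⟨v.unitsSMul scale, fun i j => ?_⟩
  simp only [Basis.unitsSMul_apply, Units.smul_def, map_smul, smul_apply, smul_eq_mul, scale,
    Units.val_mk0]
  split_ifs with hij
  · subst hij
    rw [← mul_assoc, ← mul_inv, Real.mul_self_sqrt (hvpos i).le, inv_mul_cancel₀ (hvpos i).ne']
  · rw [hv hij, mul_zero, mul_zero]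

theorem exists_linearEquiv_isometry {M : Type*} [AddCommGroup M] [Module ℝ M]
    [FiniteDimensional ℝ M] {B₁ B₂ : LinearMap.BilinForm ℝ M}
    (h₁symm : LinearMap.IsSymm B₁) (h₁pos : ∀ u : M, u ≠ 0 → 0 < B₁ u u)
    (h₂symm : LinearMap.IsSymm B₂) (h₂pos : ∀ u : M, u ≠ 0 → 0 < B₂ u u) :
    ∃ g : M ≃ₗ[ℝ] M, ∀ u v, B₁ (g u) (g v) = B₂ u v := by
  obtain ⟨b₁, hb₁⟩ := exists_basis_orthonormal h₁symm h₁pos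
  obtain ⟨b₂, hb₂⟩ := exists_basis_orthonormal h₂symm h₂pos
  let g := b₂.equiv b₁ (Equiv.refl _)
  have hcomp : B₁.comp g.toLinearMap g.toLinearMap = B₂ :=
    ext_basis b₂ fun i j => by simp [g, hb₁, hb₂]
  exact ⟨g, fun u v => by rw [← hcomp]; rfl⟩

end LinearMap.BilinForm

/-- any two Cartan involutions on `End_ℝ(M)` (adjoint involutions of two
inner products on `M`) are conjugate by an invertible element. -/
theorem stmt_2 (M : Type*) [AddCommGroup M] [Module ℝ M] [FiniteDimensional ℝ M]
    (B₁ B₂ : LinearMap.BilinForm ℝ M)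
    (h₁symm : ∀ u v : M, B₁ u v = B₁ v u) (h₁pos : ∀ u : M, u ≠ 0 → 0 < B₁ u u)
    (h₂symm : ∀ u v : M, B₂ u v = B₂ v u) (h₂pos : ∀ u : M, u ≠ 0 → 0 < B₂ u u)
    (σ₁ σ₂ : Module.End ℝ M → Module.End ℝ M)
    (hadj₁ : ∀ (x : Module.End ℝ M) (u v : M), B₁ (x u) v = B₁ u (σ₁ x v))
    (hadj₂ : ∀ (x : Module.End ℝ M) (u v : M), B₂ (x u) v = B₂ u (σ₂ x v)) :
    ∃ a : (Module.End ℝ M)ˣ, ∀ x : Module.End ℝ M,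
      σ₂ x = (a : Module.End ℝ M) * σ₁ ((↑a⁻¹ : Module.End ℝ M) * x * (a : Module.End ℝ M)) *
        (↑a⁻¹ : Module.End ℝ M) := by
  obtain ⟨g, hg⟩ := BilinForm.exists_linearEquiv_isometry ⟨h₁symm⟩ h₁pos ⟨h₂symm⟩ h₂pos
  let a : (Module.End ℝ M)ˣ := (GeneralLinearGroup.ofLinearEquiv g)⁻¹
  have ha : ∀ u v, B₁ ((↑a⁻¹ : Module.End ℝ M) u) ((↑a⁻¹ : Module.End ℝ M) v) = B₂ u v := by
    simp only [a, inv_inv]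
    exact hg
  refine ⟨a, fun x => ?_⟩
  have hconj := IsAdjointPair.conj a ha (hadj₁ ((↑a⁻¹ : Module.End ℝ M) * x * a))
  have hx : (↑a * (↑a⁻¹ * x * ↑a) * ↑a⁻¹ : Module.End ℝ M) = x := by
    simp only [mul_assoc, Units.mul_inv, mul_one, Units.mul_inv_cancel_left]
  rw [hx] at hconj
  exact IsAdjointPair.eq_of_separatingRight (separatingRight_of_apply_self_pos h₂pos)
    (hadj₂ x) hconj
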